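/- arXiv:1211.6284 — 6 statements merged into one kernel-verified Lean document; each statement's English description precedes it below -/
import Mathlib

section
/- Let Ω be an infinite set and let f, g be partial bijections of Ω such that the range of g is all of Ω, the domain of f is all of Ω, the complement in Ω of the range of f has cardinality |Ω|, and the complement in Ω of the domain of g has cardinality |Ω|. Then for every partial bijection h of Ω there exists a permutation a of Ω (a bijection from Ω to Ω) such that h = f ∘ a ∘ g (composing left to right: first f, then a, then g). -/
/-!
As `f` is a total injection and `g` is onto, it suffices to write `h = v * g` with `v` a total
injection whose co-range, like that of `f`, has size `|Ω|`: a permutation `a` sending `f x` to `v x`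
for every `x`, and the complement of the range of `f` onto that of the range of `v`, then
satisfies `f * a = v`. Such a `v` sends each `x` in the domain of `h` to the `g`-preimage of
`h x`, and the rest of `Ω` into one half of the complement of the domain of `g`; the other half
is missed by `v`.
-/

/-- A partial function `Ω →. Ω` is a partial bijection if it is injective on its domain. -/
def IsPartialBij {Ω : Type*} (f : Ω →. Ω) : Prop :=
  ∀ ⦃x y z : Ω⦄, z ∈ f x → z ∈ f y → x = y

/-- The symmetric inverse semigroup `I_Ω`: the type of all partial bijections of `Ω`. -/
def PartialBij (Ω : Type*) : Type _ :=
  {f : Ω →. Ω // IsPartialBij f}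

/-- Composition of partial bijections, written left-to-right: `f * g` means apply `f` first,
then `g`. -/
instance (Ω : Type*) : Semigroup (PartialBij Ω) where
  mul f g := ⟨g.1.comp f.1, by
    intro x y z hx hy
    rw [PFun.comp_apply] at hx hy
    obtain ⟨u, hu, hzu⟩ := Part.mem_bind_iff.1 hx
    obtain ⟨v, hv, hzv⟩ := Part.mem_bind_iff.1 hy
    have huv : u = v := g.2 hzu hzv
    subst huv
    exact f.2 hu hv⟩
  mul_assoc a b c := Subtype.ext (PFun.comp_assoc c.1 b.1 a.1).symm

/-- A permutation of `Ω`, viewed as a (total) partial bijection of `Ω`. -/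
def Equiv.Perm.toPartialBij {Ω : Type*} (a : Equiv.Perm Ω) : PartialBij Ω :=
  ⟨fun x => Part.some (a x), by
    intro x y z hx hy
    rw [Part.mem_some_iff] at hx hy
    exact a.injective (hx ▸ hy)⟩


theorem Function.Injective.exists_perm_comp_eq {α β : Type*} {u v : α → β}
    (hu : Function.Injective u) (hv : Function.Injective v)
    (hc : Cardinal.mk ↥(Set.range u)ᶜ = Cardinal.mk ↥(Set.range v)ᶜ) :
    ∃ a : Equiv.Perm β, ∀ x, a (u x) = v x := by
  classical
  obtain ⟨e⟩ := Cardinal.eq.mp hc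
  refine ⟨(Equiv.Set.sumCompl (Set.range u)).symm.trans
    ((Equiv.sumCongr ((Equiv.ofInjective u hu).symm.trans (Equiv.ofInjective v hv)) e).trans
      (Equiv.Set.sumCompl (Set.range v))), fun x => ?_⟩
  simp [Equiv.Set.sumCompl_symm_apply_of_mem (Set.mem_range_self x)]

namespace PartialBij

variable {Ω : Type*}

theorem mul_apply_of_eq_some (f g : PartialBij Ω) {x y : Ω} (hxy : f.1 x = Part.some y) :
    (f * g).1 x = g.1 y :=
  (congrArg (Part.bind · g.1) hxy).trans (Part.bind_some y g.1)

theorem exists_injective_of_dom_eq_univ {f : PartialBij Ω} (hf : f.1.Dom = Set.univ) :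
    ∃ F : Ω → Ω, Function.Injective F ∧ Set.range F = f.1.ran ∧ ∀ x, f.1 x = Part.some (F x) := by
  have hdom (x : Ω) : (f.1 x).Dom := show x ∈ f.1.Dom from hf ▸ Set.mem_univ x
  set F : Ω → Ω := fun x => (f.1 x).get (hdom x)
  have hF (x : Ω) : F x ∈ f.1 x := Part.get_mem _
  refine ⟨F, fun x y hxy => f.2 (hF x) (hxy ▸ hF y), ?_, fun x => Part.eq_some_iff.mpr (hF x)⟩
  ext y
  exact ⟨fun ⟨x, hx⟩ => ⟨x, hx ▸ hF x⟩, fun ⟨x, hx⟩ => ⟨x, Part.mem_unique (hF x) hx⟩⟩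

theorem exists_rightInverse_of_ran_eq_univ {g : PartialBij Ω} (hg : g.1.ran = Set.univ) :
    ∃ G : Ω → Ω, ∀ y, g.1 (G y) = Part.some y := by
  choose G hG using fun y => (hg ▸ Set.mem_univ y : y ∈ g.1.ran)
  exact ⟨G, fun y => Part.eq_some_iff.mpr (hG y)⟩

theorem exists_injective_comp_eq_of_ran_eq_univ [Infinite Ω] {g : PartialBij Ω}
    (hg_ran : g.1.ran = Set.univ) (hg_dom : Cardinal.mk ↥(g.1.Domᶜ) = Cardinal.mk Ω)
    (h : PartialBij Ω) :
    ∃ v : Ω → Ω, Function.Injective v ∧ Cardinal.mk ↥(Set.range v)ᶜ = Cardinal.mk Ω ∧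
      ∀ x, h.1 x = g.1 (v x) := by
  classical
  obtain ⟨G, hG⟩ := exists_rightInverse_of_ran_eq_univ hg_ran
  obtain ⟨q⟩ : Nonempty (Ω ⊕ Ω ≃ ↥(g.1.Domᶜ)) := by
    rw [← Cardinal.eq, hg_dom, Cardinal.mk_sum, Cardinal.lift_id,
      Cardinal.add_eq_self (Cardinal.aleph0_le_mk Ω)]
  have hq (s : Ω ⊕ Ω) : g.1 (q s) = Part.none := Part.eq_none_iff'.mpr (q s).2
  let v : Ω → Ω := fun x => if hx : (h.1 x).Dom then G ((h.1 x).get hx) else q (.inl x)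
  have hv (x : Ω) : h.1 x = g.1 (v x) := by
    by_cases hx : (h.1 x).Dom
    · simp only [v, dif_pos hx, hG, Part.some_get]
    · simp only [v, dif_neg hx, hq, Part.eq_none_iff'.mpr hx]
  refine ⟨v, fun x y hxy => ?_, le_antisymm (Cardinal.mk_set_le _) ?_, hv⟩
  · have hxy' : h.1 x = h.1 y := by rw [hv, hv, hxy]
    by_cases hx : (h.1 x).Dom
    · exact h.2 (Part.get_mem hx) (hxy' ▸ Part.get_mem hx)
    · have hy : ¬(h.1 y).Dom := hxy' ▸ hx
      simp only [v, dif_neg hx, dif_neg hy] at hxy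
      exact Sum.inl_injective (q.injective (Subtype.ext hxy))
  · have hinr : Function.Injective (fun x => (q (.inr x) : Ω)) := fun x y hxy =>
      Sum.inr_injective (q.injective (Subtype.ext hxy))
    have hunused : Set.range (fun x => (q (.inr x) : Ω)) ⊆ (Set.range v)ᶜ := by
      rintro _ ⟨x, rfl⟩ ⟨y, hy⟩
      by_cases hyd : (h.1 y).Dom
      · have : g.1 (v y) = Part.none := hy ▸ hq _
        exact Part.eq_none_iff'.mp ((hv y).trans this) hyd
      · simp only [v, dif_neg hyd] at hy
        exact Sum.inl_ne_inr (q.injective (Subtype.ext hy))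
    exact (Cardinal.mk_range_eq _ hinr).symm.trans_le (Cardinal.mk_le_mk_of_subset hunused)

end PartialBij

/-- If `f, g` are partial bijections of an infinite set `Ω` such that the range of `g` is all
of `Ω`, the domain of `f` is all of `Ω`, and the complements of the range of `f` and of the
domain of `g` both have cardinality `|Ω|`, then every partial bijection `h` of `Ω` factors as
`h = f * a * g` (left-to-right composition: first `f`, then `a`, then `g`) for some
permutation `a` of `Ω`. -/
theorem exists_perm_factorization_of_partialBij
    (Ω : Type*) [Infinite Ω] (f g : PartialBij Ω)
    (hg_ran : g.1.ran = Set.univ) (hf_dom : f.1.Dom = Set.univ)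
    (hf_ran : Cardinal.mk ↥(f.1.ranᶜ) = Cardinal.mk Ω)
    (hg_dom : Cardinal.mk ↥(g.1.Domᶜ) = Cardinal.mk Ω) :
    ∀ h : PartialBij Ω, ∃ a : Equiv.Perm Ω, h = f * a.toPartialBij * g := by
  intro h
  obtain ⟨F, hF_inj, hF_ran, hF⟩ := PartialBij.exists_injective_of_dom_eq_univ hf_dom
  obtain ⟨v, hv_inj, hv_ran, hv⟩ :=
    PartialBij.exists_injective_comp_eq_of_ran_eq_univ hg_ran hg_dom h
  obtain ⟨a, ha⟩ := hF_inj.exists_perm_comp_eq hv_inj (by rw [hF_ran, hf_ran, hv_ran])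
  refine ⟨a, Subtype.ext (funext fun x => ?_)⟩
  rw [hv, ← ha, PartialBij.mul_apply_of_eq_some _ _ (PartialBij.mul_apply_of_eq_some _ _ (hF x))]
end

section
/- Let Ω be an infinite set. Then every permutation of Ω is a product of two involutions; that is, for every bijection a : Ω → Ω there exist bijections i, j : Ω → Ω with i² = 1_Ω and j² = 1_Ω such that a = i ∘ j. -/
/-!
Every permutation `σ` is conjugate to its inverse by an involution `ι`: choose a base point `b`
in each cycle of `σ` and let `ι` reflect that cycle through `b`, sending `σ ^ n b` to `σ ^ (-n) b`.
Then `σ = ι * (ι * σ)`, and `ι * σ` is again an involution since `ι * σ * ι = σ⁻¹`.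
-/

theorem mul_self_mul_self_eq_one_of_conj_eq_inv {G : Type*} [Group G] {i a : G}
    (h : i * a * i = a⁻¹) : i * a * (i * a) = 1 := by
  rw [← mul_assoc, h, inv_mul_cancel]

namespace Equiv.Perm

variable {α : Type*} (σ : Perm α)

theorem zpow_neg_apply_eq_of_zpow_apply_eq {m n : ℤ} {x : α} (h : (σ ^ m) x = (σ ^ n) x) :
    (σ ^ (-m)) x = (σ ^ (-n)) x :=
  calc (σ ^ (-m)) x = (σ ^ (-m - n) * σ ^ n) x := by rw [← zpow_add, sub_add_cancel]
    _ = (σ ^ (-m - n) * σ ^ m) x := by rw [mul_apply, mul_apply, h]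
    _ = (σ ^ (-n)) x := by rw [← zpow_add]; ring_nf

noncomputable def cycleBase (x : α) : α :=
  (Quotient.mk (SameCycle.setoid σ) x).out

theorem sameCycle_cycleBase (x : α) : σ.SameCycle (σ.cycleBase x) x :=
  @Quotient.mk_out _ (SameCycle.setoid σ) x

theorem SameCycle.cycleBase_eq {σ : Perm α} {x y : α} (h : σ.SameCycle x y) :
    σ.cycleBase x = σ.cycleBase y :=
  congrArg Quotient.out (Quotient.sound h)

noncomputable def cycleReflect (x : α) : α :=
  (σ ^ (-(σ.sameCycle_cycleBase x).choose)) (σ.cycleBase x)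

theorem cycleReflect_eq {m : ℤ} {x : α} (h : (σ ^ m) (σ.cycleBase x) = x) :
    σ.cycleReflect x = (σ ^ (-m)) (σ.cycleBase x) :=
  σ.zpow_neg_apply_eq_of_zpow_apply_eq ((σ.sameCycle_cycleBase x).choose_spec.trans h.symm)

theorem cycleBase_cycleReflect (x : α) : σ.cycleBase (σ.cycleReflect x) = σ.cycleBase x :=
  ((SameCycle.symm ⟨_, rfl⟩ : σ.SameCycle (σ.cycleReflect x) (σ.cycleBase x)).trans
    (σ.sameCycle_cycleBase x)).cycleBase_eq

theorem cycleReflect_cycleReflect (x : α) : σ.cycleReflect (σ.cycleReflect x) = x := by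
  have h : (σ ^ (-(σ.sameCycle_cycleBase x).choose)) (σ.cycleBase (σ.cycleReflect x)) =
      σ.cycleReflect x := by
    rw [cycleBase_cycleReflect]; rfl
  rw [σ.cycleReflect_eq h, cycleBase_cycleReflect, neg_neg,
    (σ.sameCycle_cycleBase x).choose_spec]

theorem cycleReflect_apply (x : α) : σ.cycleReflect (σ x) = σ⁻¹ (σ.cycleReflect x) := by
  have hbase : σ.cycleBase (σ x) = σ.cycleBase x := (SameCycle.symm ⟨1, rfl⟩).cycleBase_eq
  have h : (σ ^ (1 + (σ.sameCycle_cycleBase x).choose)) (σ.cycleBase (σ x)) = σ x := by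
    rw [hbase, zpow_one_add, mul_apply, (σ.sameCycle_cycleBase x).choose_spec]
  rw [σ.cycleReflect_eq h, hbase, neg_add, zpow_add, zpow_neg_one, mul_apply]
  rfl

theorem exists_involution_conj_eq_inv :
    ∃ ι : Perm α, ι * ι = 1 ∧ ι * σ * ι = σ⁻¹ := by
  refine ⟨Function.Involutive.toPerm _ σ.cycleReflect_cycleReflect, ?_, ?_⟩ <;> ext x
  · exact σ.cycleReflect_cycleReflect x
  · change σ.cycleReflect (σ (σ.cycleReflect x)) = σ⁻¹ x
    rw [cycleReflect_apply, cycleReflect_cycleReflect]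

end Equiv.Perm

theorem perm_eq_mul_of_involutions_general (Ω : Type*) (a : Equiv.Perm Ω) :
    ∃ i j : Equiv.Perm Ω, i * i = 1 ∧ j * j = 1 ∧ a = i * j := by
  obtain ⟨ι, hι, hconj⟩ := a.exists_involution_conj_eq_inv
  exact ⟨ι, ι * a, hι, mul_self_mul_self_eq_one_of_conj_eq_inv hconj,
    by rw [← mul_assoc, hι, one_mul]⟩

/-- Every permutation of an infinite set `Ω` is a product of two involutions. -/
theorem perm_eq_mul_of_involutions (Ω : Type*) [Infinite Ω] (a : Equiv.Perm Ω) :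
    ∃ i j : Equiv.Perm Ω, i * i = 1 ∧ j * j = 1 ∧ a = i * j :=
  perm_eq_mul_of_involutions_general Ω a
end

section
/- Let Ω be an infinite set. Then for every permutation a of Ω there exists an involution j of Ω such that a⁻¹ belongs to the subsemigroup of Sym(Ω) generated (under composition alone, without taking inverses) by the two elements a and a ∘ j. -/
theorem exists_reversing_involution {Ω : Type*} (a : Equiv.Perm Ω) :
    ∃ j : Equiv.Perm Ω, j * j = 1 ∧ j * a * j = a⁻¹ := by
  classical
  have hmul : ∀ (m n : ℤ) (x : Ω), (a ^ m) ((a ^ n) x) = (a ^ (m + n)) x := by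
    intro m n x
    rw [← Equiv.Perm.mul_apply, ← zpow_add]
  have hone : ∀ (n : ℤ) (x : Ω), a ((a ^ n) x) = (a ^ (1 + n)) x := by
    intro n x
    rw [zpow_add, zpow_one, Equiv.Perm.mul_apply]
  let s : Setoid Ω := ⟨fun x y => ∃ k : ℤ, (a ^ k) x = y,
    ⟨fun x => ⟨0, by simp⟩,
     fun {x y} h => by
       obtain ⟨k, hk⟩ := h
       exact ⟨-k, by rw [← hk, hmul]; simp⟩,
     fun {x y z} h1 h2 => by
       obtain ⟨k, hk⟩ := h1
       obtain ⟨m, hm⟩ := h2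
       exact ⟨m + k, by rw [← hm, ← hk, hmul]⟩⟩⟩
  let r : Ω → Ω := fun y => (Quotient.mk s y).out
  have hrel : ∀ y, ∃ k : ℤ, (a ^ k) (r y) = y := fun y => @Quotient.mk_out Ω s y
  have hrr : ∀ x y, (∃ k : ℤ, (a ^ k) x = y) → r x = r y := by
    intro x y h
    show (Quotient.mk s x).out = (Quotient.mk s y).out
    rw [Quotient.sound (s := s) h]
  let k : Ω → ℤ := fun y => (hrel y).choose
  have hk : ∀ y, (a ^ k y) (r y) = y := fun y => (hrel y).choose_spec
  let f : Ω → Ω := fun y => (a ^ (-(k y))) (r y)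
  have key : ∀ (y : Ω) (m : ℤ), (a ^ m) (r y) = y → f y = (a ^ (-m)) (r y) := by
    intro y m hm
    have h1 : (a ^ m) (r y) = (a ^ k y) (r y) := hm.trans (hk y).symm
    have h2 := congrArg (⇑(a ^ (-(k y) - m))) h1
    rw [hmul, hmul] at h2
    have e1 : -(k y) - m + m = -(k y) := by ring
    have e2 : -(k y) - m + k y = -m := by ring
    rw [e1, e2] at h2
    exact h2
  have hrf : ∀ y, r (f y) = r y := by
    intro y
    have : r (f y) = r (r y) := hrr _ _ ⟨k y, by
      show (a ^ k y) ((a ^ (-(k y))) (r y)) = r y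
      rw [hmul]; simp⟩
    rw [this]
    exact hrr _ _ (hrel y)
  have hff : ∀ y, f (f y) = y := by
    intro y
    have h1 : (a ^ (-(k y))) (r (f y)) = f y := by rw [hrf y]
    have := key (f y) (-(k y)) h1
    rw [this, hrf y, neg_neg, hk y]
  let j : Equiv.Perm Ω := ⟨f, f, hff, hff⟩
  refine ⟨j, Equiv.ext hff, ?_⟩
  ext y
  show f (a (f y)) = a⁻¹ y
  have horb : r (a (f y)) = r y := hrr (a (f y)) y ⟨2 * k y - 1, by
    show (a ^ (2 * k y - 1)) (a ((a ^ (-(k y))) (r y))) = y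
    rw [hone, hmul]
    have : 2 * k y - 1 + (1 + -(k y)) = k y := by ring
    rw [this]
    exact hk y⟩
  have h1 : (a ^ ((1 : ℤ) + (-(k y)))) (r (a (f y))) = a (f y) := by
    rw [horb]
    show (a ^ ((1 : ℤ) + (-(k y)))) (r y) = a ((a ^ (-(k y))) (r y))
    rw [hone]
  have h2 := key (a (f y)) ((1 : ℤ) + (-(k y))) h1
  rw [h2, horb]
  have e : -((1:ℤ) + -(k y)) = -1 + k y := by ring
  rw [e, ← hmul, hk y]
  rfl

/-- For every permutation `a` of an infinite set `Ω` there is an involution `j` such that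
`a⁻¹` lies in the subsemigroup of `Sym(Ω)` generated (under composition alone, without
taking inverses) by `a` and `a ∘ j`. -/
theorem inv_mem_subsemigroup_closure_of_perm (Ω : Type*) [Infinite Ω] (a : Equiv.Perm Ω) :
    ∃ j : Equiv.Perm Ω, j * j = 1 ∧
      a⁻¹ ∈ (Subsemigroup.closure {a, a * j} : Subsemigroup (Equiv.Perm Ω)) := by
  obtain ⟨j₁, hj₁, hconj⟩ := exists_reversing_involution a
  refine ⟨j₁ * a, ?_, ?_⟩
  · have : j₁ * a * (j₁ * a) = j₁ * a * j₁ * a := by group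
    rw [this, hconj, inv_mul_cancel]
  · have haj : a * (j₁ * a) = j₁ := by
      calc a * (j₁ * a) = a * (j₁ * a * (j₁ * j₁)) := by rw [hj₁, mul_one]
        _ = a * (j₁ * a * j₁) * j₁ := by group
        _ = a * a⁻¹ * j₁ := by rw [hconj]
        _ = j₁ := by group
    have h1 : a ∈ Subsemigroup.closure {a, a * (j₁ * a)} :=
      Subsemigroup.subset_closure (Set.mem_insert _ _)
    have h2 : a * (j₁ * a) ∈ Subsemigroup.closure {a, a * (j₁ * a)} :=
      Subsemigroup.subset_closure (Set.mem_insert_of_mem _ rfl)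
    have : a⁻¹ = a * (j₁ * a) * a * (a * (j₁ * a)) := by
      rw [haj]; exact hconj.symm
    rw [this]
    exact mul_mem (mul_mem h2 h1) h2
end

section
/- Let Ω be an infinite set. Then every countable subset of Ω^Ω is contained in a 2-generated subsemigroup of Ω^Ω; that is, for every countable set A of functions from Ω to Ω there exist functions f, g : Ω → Ω such that every element of A belongs to the subsemigroup of Ω^Ω generated by {f, g}. -/
/-!
Fix a bijection `Ω × ℕ ≃ Ω`, written `(x, k) ↦ ⟨x, k⟩`, and let `g x = ⟨x, 0⟩`. The second
generator `f` walks along the "tracks" `k ↦ ⟨⟨x, 0⟩, k⟩`, sending `⟨⟨x, 0⟩, k⟩` to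
`⟨⟨x, 0⟩, k + 1⟩`, and on the disjoint set of points `⟨⟨w, n + 1⟩, 0⟩` it evaluates the `n`-th
given map at the first coordinate of `w`. Starting from `y`, the word `g g` enters the track of `y`,
`f ^ (n + 1)` moves `n + 1` steps along it, and `g` followed by `f` then reads off `aₙ y`:
`aₙ = f g f ^ (n + 1) g g`.
-/

theorem Subsemigroup.pow_succ_mem {M : Type*} [Monoid M] {S : Subsemigroup M} {x : M}
    (hx : x ∈ S) : ∀ n : ℕ, x ^ (n + 1) ∈ S
  | 0 => by simpa using hx
  | n + 1 => by rw [pow_succ]; exact mul_mem (pow_succ_mem hx n) hx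

namespace Sierpinski

variable {Ω : Type*} (E : Ω × ℕ ≃ Ω) (a : ℕ → Function.End Ω)

def embed : Function.End Ω := fun x => E (x, 0)

noncomputable def shiftOrEval : Function.End Ω := fun z =>
  match E.symm z, E.symm (E.symm z).1 with
  | (u, k), (_, 0) => E (u, k + 1)
  | (_, 0), (w, j + 1) => a j (E.symm w).1
  | _, _ => z

lemma shiftOrEval_track (x : Ω) (k : ℕ) :
    shiftOrEval E a (E (E (x, 0), k)) = E (E (x, 0), k + 1) := by
  simp [shiftOrEval]

lemma shiftOrEval_eval (w : Ω) (j : ℕ) :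
    shiftOrEval E a (E (E (w, j + 1), 0)) = a j (E.symm w).1 := by
  simp [shiftOrEval]

lemma shiftOrEval_pow_track (x : Ω) (k : ℕ) :
    (shiftOrEval E a ^ k) (E (E (x, 0), 0)) = E (E (x, 0), k) := by
  induction k with
  | zero => rfl
  | succ k ih =>
    rw [pow_succ']
    change shiftOrEval E a ((shiftOrEval E a ^ k) _) = _
    rw [ih, shiftOrEval_track]

lemma eq_word (n : ℕ) :
    a n = shiftOrEval E a * embed E * shiftOrEval E a ^ (n + 1) * embed E * embed E := by
  funext y
  change _ = shiftOrEval E a (E ((shiftOrEval E a ^ (n + 1)) (E (E (y, 0), 0)), 0))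
  rw [shiftOrEval_pow_track, shiftOrEval_eval, Equiv.symm_apply_apply]

theorem range_subset_closure :
    Set.range a ⊆ Subsemigroup.closure {shiftOrEval E a, embed E} := by
  rintro _ ⟨n, rfl⟩
  have hf := Subsemigroup.subset_closure (Set.mem_insert (shiftOrEval E a) {embed E})
  have hg := Subsemigroup.subset_closure
    (Set.mem_insert_of_mem (shiftOrEval E a) (Set.mem_singleton (embed E)))
  rw [eq_word E a n]
  exact mul_mem (mul_mem (mul_mem (mul_mem hf hg) (Subsemigroup.pow_succ_mem hf n)) hg) hg

end Sierpinski

/-- Sierpiński's theorem: every countable set of functions from an infinite set `Ω` to itself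
is contained in a 2-generated subsemigroup of the semigroup `Ω^Ω` of all self-maps of `Ω`
under composition. -/
theorem countable_subset_of_two_generated_subsemigroup_of_functionEnd
    (Ω : Type*) [Infinite Ω] (A : Set (Function.End Ω)) (hA : A.Countable) :
    ∃ f g : Function.End Ω,
      A ⊆ (Subsemigroup.closure {f, g} : Subsemigroup (Function.End Ω)) := by
  obtain ⟨a, hAa⟩ := Set.countable_iff_exists_subset_range.1 hA
  obtain ⟨E⟩ : Nonempty (Ω × ℕ ≃ Ω) := Cardinal.eq.1 (by simp)
  exact ⟨_, _, hAa.trans (Sierpinski.range_subset_closure E a)⟩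
end

section
/- Every countable semigroup embeds in a 2-generated semigroup; that is, for every countable semigroup S there exists a semigroup T generated by two of its elements and an injective semigroup homomorphism from S into T. -/
private theorem two_gen_core (S : Type) [Semigroup S] [Countable S] :
    ∃ (T : Type) (_ : Semigroup T) (f g : T),
      (Subsemigroup.closure {f, g} : Subsemigroup T) = ⊤ ∧
        ∃ φ : S → T, Function.Injective φ ∧ ∀ a b : S, φ (a * b) = φ a * φ b := by
  classical
  obtain ⟨e, he⟩ := Countable.exists_injective_nat S
  -- M : the monoid with 1 adjoined
  set M := WithOne S
  set Y := M ⊕ (ℕ × M) with hY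
  -- family of functions: f (e s + 1) = left multiplication by s, f 0 = id
  set F : ℕ → M → M := fun n x => if h : ∃ s : S, e s + 1 = n then (h.choose : M) * x else x
    with hF
  have hF0 : ∀ x, F 0 x = x := by
    intro x
    simp only [hF]
    rw [dif_neg]
    rintro ⟨s, hs⟩
    omega
  have hFe : ∀ (s : S) (x : M), F (e s + 1) x = (s : M) * x := by
    intro s x
    have h : ∃ t : S, e t + 1 = e s + 1 := ⟨s, rfl⟩
    have : h.choose = s := he (by have := h.choose_spec; omega)
    simp only [hF, dif_pos h, this]
  -- the two generators as functions on Y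
  set a : Function.End Y := fun y =>
    match y with
    | .inl x => .inr (0, x)
    | .inr (k, x) => .inl (F k x) with ha
  set b : Function.End Y := fun y =>
    match y with
    | .inl x => .inl x
    | .inr (k, x) => .inr (k + 1, x) with hb
  have hbpow : ∀ (n : ℕ) (k : ℕ) (x : M), (b ^ n) (Sum.inr (k, x)) = Sum.inr (k + n, x) := by
    intro n
    induction n with
    | zero => intro k x; rfl
    | succ m ih =>
      intro k x
      rw [pow_succ]
      show (b ^ m) (b (Sum.inr (k, x))) = _
      have h1 : b (Sum.inr (k, x)) = (Sum.inr (k + 1, x) : Y) := rfl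
      rw [h1, ih]
      have : k + 1 + m = k + (m + 1) := by omega
      rw [this]
  have hbpow0 : ∀ (n : ℕ) (x : M), (b ^ n) (Sum.inl x) = Sum.inl x := by
    intro n
    induction n with
    | zero => intro x; rfl
    | succ m ih =>
      intro x
      rw [pow_succ]
      show (b ^ m) (b (Sum.inl x)) = _
      have h1 : b (Sum.inl x) = (Sum.inl x : Y) := rfl
      rw [h1, ih]
  -- the word for s
  set W : S → Function.End Y := fun s => a * b ^ (e s + 1) * a with hW
  have hWinl : ∀ (s : S) (x : M), W s (Sum.inl x) = Sum.inl ((s : M) * x) := by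
    intro s x
    show a ((b ^ (e s + 1)) (a (Sum.inl x))) = _
    have h1 : a (Sum.inl x) = Sum.inr (0, x) := rfl
    rw [h1, hbpow]
    show Sum.inl (F (0 + (e s + 1)) x) = _
    rw [Nat.zero_add, hFe]
  have hWinr : ∀ (s : S) (k : ℕ) (x : M), W s (Sum.inr (k, x)) = Sum.inr (0, F k x) := by
    intro s k x
    show a ((b ^ (e s + 1)) (a (Sum.inr (k, x)))) = _
    have h1 : a (Sum.inr (k, x)) = Sum.inl (F k x) := rfl
    rw [h1, hbpow0]
  have hWmul : ∀ s t : S, W (s * t) = W s * W t := by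
    intro s t
    funext y
    match y with
    | .inl x =>
      show W (s * t) (Sum.inl x) = W s (W t (Sum.inl x))
      rw [hWinl, hWinl, hWinl, WithOne.coe_mul, mul_assoc]
    | .inr (k, x) =>
      show W (s * t) (Sum.inr (k, x)) = W s (W t (Sum.inr (k, x)))
      simp only [hWinr, hF0]
  have hWinj : Function.Injective W := by
    intro s t hst
    have := congrArg (fun w => w (Sum.inl (1 : M))) hst
    simp only [hWinl, mul_one] at this
    exact WithOne.coe_inj.mp (Sum.inl.inj this)
  -- membership in the closure
  have haMem : a ∈ Subsemigroup.closure ({a, b} : Set (Function.End Y)) :=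
    Subsemigroup.subset_closure (Set.mem_insert _ _)
  have hbMem : b ∈ Subsemigroup.closure ({a, b} : Set (Function.End Y)) :=
    Subsemigroup.subset_closure (Set.mem_insert_of_mem _ rfl)
  have hWmem : ∀ s : S, W s ∈ Subsemigroup.closure ({a, b} : Set (Function.End Y)) := by
    intro s
    have hba : ∀ n : ℕ, b ^ n * a ∈ Subsemigroup.closure ({a, b} : Set (Function.End Y)) := by
      intro n
      induction n with
      | zero => simpa using haMem
      | succ m ih =>
        rw [pow_succ', mul_assoc]
        exact mul_mem hbMem ih
    have : W s = a * (b ^ (e s + 1) * a) := by rw [hW]; simp [mul_assoc]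
    rw [this]
    exact mul_mem haMem (hba _)
  -- build T
  refine ⟨Subsemigroup.closure ({a, b} : Set (Function.End Y)), inferInstance,
    ⟨a, haMem⟩, ⟨b, hbMem⟩, ?_, fun s => ⟨W s, hWmem s⟩, ?_, ?_⟩
  · have : ({⟨a, haMem⟩, ⟨b, hbMem⟩} :
        Set (Subsemigroup.closure ({a, b} : Set (Function.End Y)))) =
        ((Subtype.val : Subsemigroup.closure ({a, b} : Set (Function.End Y)) → Function.End Y)
          ⁻¹' {a, b}) := by
      ext x
      constructor
      · rintro (rfl | rfl)
        · exact Set.mem_insert _ _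
        · exact Set.mem_insert_of_mem _ rfl
      · rintro (h | h)
        · exact Or.inl (Subtype.ext h)
        · exact Or.inr (Subtype.ext h)
    rw [this, Subsemigroup.closure_closure_coe_preimage]
  · intro s t h
    exact hWinj (congrArg Subtype.val h)
  · intro s t
    exact Subtype.ext (hWmul s t)

/-- Every countable semigroup embeds in a 2-generated semigroup. -/
theorem countable_semigroup_embeds_in_two_generated_semigroup
    (S : Type*) [Semigroup S] [Countable S] :
    ∃ (T : Type) (_ : Semigroup T) (f g : T),
      (Subsemigroup.closure {f, g} : Subsemigroup T) = ⊤ ∧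
        ∃ φ : S → T, Function.Injective φ ∧ ∀ a b : S, φ (a * b) = φ a * φ b := by
  haveI : Countable (Shrink.{0} S) := Countable.of_equiv S (equivShrink.{0} S)
  obtain ⟨T, _, f, g, hfg, φ, hinj, hmul⟩ := two_gen_core (Shrink.{0} S)
  refine ⟨T, ‹_›, f, g, hfg, φ ∘ (Shrink.mulEquiv.symm : S ≃* Shrink.{0} S), ?_, ?_⟩
  · exact hinj.comp (MulEquiv.injective _)
  · intro s t
    simp only [Function.comp_apply, map_mul, hmul]
end

section
/- Every countable group embeds in a 2-generated group; that is, for every countable group G there exists a group H generated by two of its elements and an injective group homomorphism from G into H. -/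
/-!
Work in the unrestricted wreath product `D ≀ᵣ ℤ`, with generator `t` of `ℤ` and base functions
`ℤ → D`. For a sequence `e` in `D`, let `F` carry `e q` at position `2 ^ q` and `1` elsewhere.
Since a nonzero difference of two powers of two determines both of them, the only position where
`F` and its conjugate by `t ^ (2 ^ i - 2 ^ j)` can both be nontrivial is `2 ^ i`, so their
commutator is `⁅e j, e i⁆` there and `1` elsewhere; conjugating by a power of `t` moves it to `0`.
Hence `⟨t, F⟩` contains every commutator `⁅e j, e i⁆` with `i ≠ j`, placed at `0`.

To reach arbitrary elements of a countable group `Γ`, first embed `Γ` at coordinate `0` of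
`Γ ≀ᵣ ℤ`, where every such element `g` is the commutator of `t` and the step function equal to `g`
on the negative integers. Enumerating `t` and these step functions and applying the above in
`(Γ ≀ᵣ ℤ) ≀ᵣ ℤ` embeds `Γ` in a 2-generated subgroup.
-/

theorem Nat.log_two_pow_sub_two_pow {p r : ℕ} (h : r < p) : Nat.log 2 (2 ^ p - 2 ^ r) = p - 1 := by
  obtain ⟨m, rfl⟩ : ∃ m, p = m + 1 := ⟨p - 1, by omega⟩
  have hrm : 2 ^ r ≤ 2 ^ m := Nat.pow_le_pow_right two_pos (by omega)
  have hr : 0 < 2 ^ r := by positivity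
  rw [Nat.add_sub_cancel]
  refine Nat.log_eq_of_pow_le_of_lt_pow ?_ ?_ <;> rw [pow_succ] <;> omega

theorem two_pow_sub_two_pow_inj {p r i j : ℕ} (hij : i ≠ j)
    (h : (2 : ℤ) ^ p - 2 ^ r = 2 ^ i - 2 ^ j) : p = i ∧ r = j := by
  wlog hji : j < i generalizing p r i j
  · exact (this hij.symm (by linarith) (by omega)).symm
  have hrp : r < p := by
    by_contra! hpr
    have := pow_le_pow_right₀ (M₀ := ℤ) one_le_two hpr
    have := pow_lt_pow_right₀ (M₀ := ℤ) one_lt_two hji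
    linarith
  have hnat : 2 ^ p - 2 ^ r = 2 ^ i - 2 ^ j := by
    have := Nat.pow_le_pow_right two_pos hrp.le
    have := Nat.pow_le_pow_right two_pos hji.le
    zify [*]
  have hpi : p = i := by
    have := congrArg (Nat.log 2) hnat
    rw [Nat.log_two_pow_sub_two_pow hrp, Nat.log_two_pow_sub_two_pow hji] at this
    omega
  subst hpi
  exact ⟨rfl, Nat.pow_right_injective le_rfl (by simpa using h)⟩

open Multiplicative Function
open scoped commutatorElement

namespace RegularWreathProduct

variable {D Q : Type*} [Group D] [Group Q]

def base : (Q → D) →* D ≀ᵣ Q where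
  toFun f := ⟨f, 1⟩
  map_one' := rfl
  map_mul' f g := by ext <;> simp

theorem base_injective : Injective (base : (Q → D) →* D ≀ᵣ Q) :=
  fun _ _ h => congrArg left h

theorem inl_mul_base_mul_inv (q : Q) (f : Q → D) :
    inl q * base f * (inl q)⁻¹ = base fun x => f (q⁻¹ * x) := by
  ext x <;> simp [base, mul_assoc]

theorem inl_mul_base_mulSingle_mul_inv [DecidableEq Q] (q q' : Q) (d : D) :
    inl q * base (Pi.mulSingle q' d) * (inl q)⁻¹ = base (Pi.mulSingle (q * q') d) := by
  rw [inl_mul_base_mul_inv]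
  congr 1
  ext x
  simp only [Pi.mulSingle_apply, inv_mul_eq_iff_eq_mul]

theorem commutatorElement_inl_base (q : Q) (f : Q → D) :
    ⁅(inl q : D ≀ᵣ Q), base f⁆ = base fun x => f (q⁻¹ * x) * (f x)⁻¹ := by
  rw [commutatorElement_def, inl_mul_base_mul_inv, ← map_inv, ← map_mul]
  rfl

variable (Q) in
def single [DecidableEq Q] : D →* D ≀ᵣ Q :=
  base.comp (MonoidHom.mulSingle (fun _ : Q => D) 1)

theorem single_injective [DecidableEq Q] : Injective (single Q : D →* D ≀ᵣ Q) :=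
  base_injective.comp (Pi.mulSingle_injective (M := fun _ : Q => D) 1)

theorem single_eq_commutatorElement (d : D) :
    single (Multiplicative ℤ) d =
      ⁅(inl (ofAdd 1) : D ≀ᵣ Multiplicative ℤ),
        base fun x : Multiplicative ℤ => if x.toAdd < 0 then d else 1⁆ := by
  rw [commutatorElement_inl_base, single, MonoidHom.comp_apply]
  congr 1
  funext x
  simp only [MonoidHom.mulSingle_apply, Pi.mulSingle_apply, ← toAdd_eq_zero, toAdd_mul, toAdd_inv,
    toAdd_ofAdd]
  split_ifs <;> first | omega | simp

theorem inl_eq_zpow (q : Multiplicative ℤ) :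
    (inl q : D ≀ᵣ Multiplicative ℤ) = inl (ofAdd 1) ^ q.toAdd := by
  rw [← map_zpow, ← ofAdd_zsmul, zsmul_one, Int.cast_id, ofAdd_toAdd]

theorem injective_ofAdd_two_pow : Injective fun q : ℕ => ofAdd ((2 : ℤ) ^ q) :=
  ofAdd.injective.comp (pow_right_injective₀ two_pos (by norm_num))

noncomputable def powTwoCode (e : ℕ → D) : Multiplicative ℤ → D :=
  extend (fun q : ℕ => ofAdd ((2 : ℤ) ^ q)) e 1

theorem powTwoCode_ofAdd_two_pow (e : ℕ → D) (q : ℕ) :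
    powTwoCode e (ofAdd (2 ^ q)) = e q :=
  injective_ofAdd_two_pow.extend_apply e 1 q

theorem exists_eq_ofAdd_two_pow_of_powTwoCode_ne_one {e : ℕ → D} {x : Multiplicative ℤ}
    (h : powTwoCode e x ≠ 1) : ∃ q : ℕ, x = ofAdd (2 ^ q) := by
  by_contra hx
  exact h (extend_apply' _ _ _ fun ⟨q, hq⟩ => hx ⟨q, hq.symm⟩)

theorem commutatorElement_conj_base_powTwoCode (e : ℕ → D) {i j : ℕ} (hij : i ≠ j) :
    ⁅inl (ofAdd (2 ^ i - 2 ^ j)) * base (powTwoCode e) * (inl (ofAdd (2 ^ i - 2 ^ j)))⁻¹,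
      base (powTwoCode e)⁆ = base (Pi.mulSingle (ofAdd (2 ^ i)) ⁅e j, e i⁆) := by
  rw [inl_mul_base_mul_inv, ← map_commutatorElement]
  congr 1
  funext x
  change ⁅powTwoCode e _, powTwoCode e x⁆ = _
  obtain ⟨n, rfl⟩ := ofAdd.surjective x
  rw [← ofAdd_neg, ← ofAdd_add]
  by_cases hn : n = 2 ^ i
  · subst hn
    rw [Pi.mulSingle_eq_same, show -(2 ^ i - 2 ^ j) + 2 ^ i = (2 : ℤ) ^ j by ring,
      powTwoCode_ofAdd_two_pow, powTwoCode_ofAdd_two_pow]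
  rw [Pi.mulSingle_eq_of_ne (by simpa using hn)]
  by_contra hne
  obtain ⟨r, hr⟩ := exists_eq_ofAdd_two_pow_of_powTwoCode_ne_one
    fun h => hne (by rw [h, commutatorElement_one_left])
  obtain ⟨p, hp⟩ := exists_eq_ofAdd_two_pow_of_powTwoCode_ne_one (x := ofAdd n)
    fun h => hne (by rw [h, commutatorElement_one_right])
  simp only [ofAdd.injective.eq_iff] at hr hp
  exact hn (hp.trans (congrArg _ (two_pow_sub_two_pow_inj (r := r) hij (by linarith)).1))

theorem single_commutatorElement_mem_closure (e : ℕ → D) {i j : ℕ} (hij : i ≠ j) :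
    single (Multiplicative ℤ) ⁅e j, e i⁆ ∈
      Subgroup.closure {(inl (ofAdd 1) : D ≀ᵣ Multiplicative ℤ), base (powTwoCode e)} := by
  set S := Subgroup.closure {(inl (ofAdd 1) : D ≀ᵣ Multiplicative ℤ), base (powTwoCode e)}
  have hF : base (powTwoCode e) ∈ S := Subgroup.subset_closure (by simp)
  have hconj (q : Multiplicative ℤ) {x} (hx : x ∈ S) : inl q * x * (inl q)⁻¹ ∈ S := by
    have hq : inl q ∈ S := by
      rw [inl_eq_zpow]
      exact zpow_mem (Subgroup.subset_closure (by simp)) _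
    exact mul_mem (mul_mem hq hx) (inv_mem hq)
  have hsingle : base (Pi.mulSingle (ofAdd (2 ^ i)) ⁅e j, e i⁆) ∈ S := by
    rw [← commutatorElement_conj_base_powTwoCode e hij, commutatorElement_def]
    exact mul_mem (mul_mem (mul_mem (hconj _ hF) hF) (inv_mem (hconj _ hF))) (inv_mem hF)
  convert hconj (ofAdd (-2 ^ i)) hsingle using 1
  rw [inl_mul_base_mulSingle_mul_inv, ← ofAdd_add, neg_add_cancel, ofAdd_zero]
  rfl

end RegularWreathProduct

open RegularWreathProduct

theorem exists_two_generated_of_range_le_closure {G : Type*} {H : Type} [Group G] [Group H]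
    (φ : G →* H) (hφ : Injective φ) {a b : H} (h : φ.range ≤ Subgroup.closure {a, b}) :
    ∃ (K : Type) (_ : Group K) (f g : K), Subgroup.closure {f, g} = ⊤ ∧
      ∃ ψ : G → K, Injective ψ ∧ ∀ x y : G, ψ (x * y) = ψ x * ψ y := by
  set S := Subgroup.closure {a, b}
  have hgen : Subgroup.closure {(⟨a, Subgroup.subset_closure (by simp)⟩ : S),
      ⟨b, Subgroup.subset_closure (by simp)⟩} = ⊤ := by
    convert Subgroup.closure_closure_coe_preimage (k := {a, b}) using 2
    ext x
    simp [Subtype.ext_iff]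
  refine ⟨S, inferInstance, _, _, hgen, φ.codRestrict S fun x => h ⟨x, rfl⟩, ?_, map_mul _⟩
  exact fun x y hxy => hφ (congrArg Subtype.val hxy)

theorem exists_range_single_comp_single_le_closure_pair (Γ : Type*) [Group Γ] [Countable Γ] :
    ∃ a b : (Γ ≀ᵣ Multiplicative ℤ) ≀ᵣ Multiplicative ℤ,
      ((single _).comp (single _) : Γ →* _).range ≤ Subgroup.closure {a, b} := by
  obtain ⟨s, hs⟩ := exists_surjective_nat Γ
  obtain ⟨e, he0, heS⟩ : ∃ e : ℕ → Γ ≀ᵣ Multiplicative ℤ, e 0 = inl (ofAdd 1) ∧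
      ∀ n, e (n + 1) = base fun x => if x.toAdd < 0 then s n else 1 :=
    ⟨fun n => n.casesOn (inl (ofAdd 1)) fun n => base fun x => if x.toAdd < 0 then s n else 1,
      rfl, fun _ => rfl⟩
  refine ⟨inl (ofAdd 1), base (powTwoCode e), ?_⟩
  rintro _ ⟨g, rfl⟩
  obtain ⟨n, rfl⟩ := hs g
  rw [MonoidHom.comp_apply, single_eq_commutatorElement (s n), ← he0, ← heS]
  exact single_commutatorElement_mem_closure e n.succ_ne_zero

/-- Every countable group embeds in a 2-generated group. -/
theorem countable_group_embeds_in_two_generated_group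
    (G : Type*) [Group G] [Countable G] :
    ∃ (H : Type) (_ : Group H) (f g : H),
      (Subgroup.closure {f, g} : Subgroup H) = ⊤ ∧
        ∃ φ : G → H, Function.Injective φ ∧ ∀ a b : G, φ (a * b) = φ a * φ b := by
  have : Countable (Shrink.{0} G) := Countable.of_equiv G (equivShrink.{0} G)
  obtain ⟨a, b, hab⟩ := exists_range_single_comp_single_le_closure_pair (Shrink.{0} G)
  let φ : G →* (Shrink.{0} G ≀ᵣ Multiplicative ℤ) ≀ᵣ Multiplicative ℤ :=
    ((single _).comp (single _)).comp Shrink.mulEquiv.symm.toMonoidHom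
  have hφ : Injective φ :=
    (single_injective.comp single_injective).comp Shrink.mulEquiv.symm.injective
  exact exists_two_generated_of_range_le_closure φ hφ fun _ ⟨x, hx⟩ => hab ⟨_, hx⟩
end
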